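/- Let p_s(x) = (2πs)^{−1/2} exp(−x²/(2s)). Fix M > 0, reals y₁ > y₂, sequences a_n ∈ [1/M, M] and z₁⁽ⁿ⁾, z₂⁽ⁿ⁾ ∈ [−M, M] with z₁⁽ⁿ⁾ − z₂⁽ⁿ⁾ arbitrary, and fix t > 0. Then as n → ∞, a_n √n · det( p_{a_n − t/n}( y_i/√n − z_j⁽ⁿ⁾ ) )_{i,j=1}² / ( (z₁⁽ⁿ⁾ − z₂⁽ⁿ⁾) p_{a_n}(z₁⁽ⁿ⁾) p_{a_n}(z₂⁽ⁿ⁾) ) → y₁ − y₂, uniformly over a_n ∈ [1/M, M] and z₁⁽ⁿ⁾, z₂⁽ⁿ⁾ ∈ [−M, M] with z₁⁽ⁿ⁾ > z₂⁽ⁿ⁾. -/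

import Mathlib

noncomputable def heatKernel (s x : ℝ) : ℝ :=
    (Real.sqrt (2 * Real.pi * s))⁻¹ * Real.exp (-x ^ 2 / (2 * s))

/-!
With `s = a - t/n`, `r = √n` and `c = (y₁ - y₂)(z₁ - z₂)/(s r)`, the two products in the
determinant differ only by a factor `e^{-c}`, so the normalised determinant equals
`(a/s)² · e^E · (1 - e^{-c})/c · (y₁ - y₂)` for an exponent `E` that vanishes in the limit.
As `n → ∞` and `(a, z₁, z₂)` tends to any point of the compact closure of the parameter set,
`a/s → 1`, `E → 0` and `c → 0` with `c ≠ 0`, where `(1 - e^{-c})/c` is a difference quotient of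
`exp` at `0`. Compactness turns these pointwise limits into the uniform statement.
-/

open Real Filter Topology Set

theorem heatKernel_mul_heatKernel {s : ℝ} (hs : 0 < s) (x y : ℝ) :
    heatKernel s x * heatKernel s y = (2 * π * s)⁻¹ * exp (-(x ^ 2 + y ^ 2) / (2 * s)) := by
  have hsq : √(2 * π * s) * √(2 * π * s) = 2 * π * s := Real.mul_self_sqrt (by positivity)
  rw [heatKernel, heatKernel, mul_mul_mul_comm, ← mul_inv, hsq, ← Real.exp_add]
  congr 2
  ring

theorem heatKernel_det_div_eq {a s r y₁ y₂ z₁ z₂ : ℝ} (ha : 0 < a) (hs : 0 < s) (hr : 0 < r)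
    (hy : y₁ ≠ y₂) (hz : z₁ ≠ z₂) :
    a * r * (heatKernel s (y₁ / r - z₁) * heatKernel s (y₂ / r - z₂)
        - heatKernel s (y₁ / r - z₂) * heatKernel s (y₂ / r - z₁))
      / ((z₁ - z₂) * heatKernel a z₁ * heatKernel a z₂)
    = (a / s) ^ 2
      * exp ((z₁ ^ 2 + z₂ ^ 2) / (2 * a) - ((y₁ / r - z₁) ^ 2 + (y₂ / r - z₂) ^ 2) / (2 * s))
      * ((1 - exp (-((y₁ - y₂) * (z₁ - z₂) / s / r))) / ((y₁ - y₂) * (z₁ - z₂) / s / r))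
      * (y₁ - y₂) := by
  have hcross : -((y₁ / r - z₂) ^ 2 + (y₂ / r - z₁) ^ 2) / (2 * s)
      = -((y₁ / r - z₁) ^ 2 + (y₂ / r - z₂) ^ 2) / (2 * s) + -((y₁ - y₂) * (z₁ - z₂) / s / r) := by
    field_simp
    ring
  have hE : exp ((z₁ ^ 2 + z₂ ^ 2) / (2 * a) - ((y₁ / r - z₁) ^ 2 + (y₂ / r - z₂) ^ 2) / (2 * s))
      = exp (-((y₁ / r - z₁) ^ 2 + (y₂ / r - z₂) ^ 2) / (2 * s))
        / exp (-(z₁ ^ 2 + z₂ ^ 2) / (2 * a)) := by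
    rw [← exp_sub]
    ring_nf
  rw [mul_assoc (z₁ - z₂), heatKernel_mul_heatKernel hs, heatKernel_mul_heatKernel hs,
    heatKernel_mul_heatKernel ha, hcross, exp_add, hE]
  field_simp

theorem tendsto_one_sub_exp_neg_div :
    Tendsto (fun c : ℝ => (1 - exp (-c)) / c) (𝓝[≠] 0) (𝓝 1) := by
  have h := ((hasDerivAt_neg (0 : ℝ)).exp.neg).tendsto_slope_zero
  convert h using 2 with c
  · simp [div_eq_inv_mul, neg_add_eq_sub]
  · simp

theorem eventually_forall_mem_inter_of_isCompact {ι X : Type*} [TopologicalSpace X]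
    {l : Filter ι} {K S : Set X} (hK : IsCompact K) {P : ι → X → Prop}
    (h : ∀ x ∈ K, ∀ᶠ z in l ×ˢ 𝓝[S] x, P z.1 z.2) : ∀ᶠ i in l, ∀ x ∈ K ∩ S, P i x := by
  have h' : ∀ x ∈ K, ∀ᶠ z in l ×ˢ 𝓝 x, z.2 ∈ S → P z.1 z.2 := fun x hx => by
    have := h x hx
    rwa [nhdsWithin, ← inf_top_eq l, ← prod_inf_prod, top_prod, comap_principal,
      eventually_inf_principal] at this
  have hKS : ∀ᶠ z in l ×ˢ 𝓝ˢ K, z.2 ∈ S → P z.1 z.2 := hK.mem_prod_nhdsSet_of_forall h'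
  exact hKS.curry.mono fun i hi x hx => hi.self_of_nhdsSet x hx.1 hx.2

theorem tendsto_heatKernel_det_div {ι : Type*} {l : Filter ι} {y₁ y₂ a₀ w₁ w₂ : ℝ}
    {a s r z₁ z₂ : ι → ℝ} (hy : y₁ ≠ y₂) (ha₀ : 0 < a₀) (ha : Tendsto a l (𝓝 a₀))
    (hs : Tendsto s l (𝓝 a₀)) (hr : Tendsto r l atTop) (hz₁ : Tendsto z₁ l (𝓝 w₁))
    (hz₂ : Tendsto z₂ l (𝓝 w₂)) (hz : ∀ᶠ i in l, z₁ i ≠ z₂ i) :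
    Tendsto (fun i => a i * r i
        * (heatKernel (s i) (y₁ / r i - z₁ i) * heatKernel (s i) (y₂ / r i - z₂ i)
          - heatKernel (s i) (y₁ / r i - z₂ i) * heatKernel (s i) (y₂ / r i - z₁ i))
        / ((z₁ i - z₂ i) * heatKernel (a i) (z₁ i) * heatKernel (a i) (z₂ i)))
      l (𝓝 (y₁ - y₂)) := by
  have ha_pos : ∀ᶠ i in l, 0 < a i := ha.eventually (lt_mem_nhds ha₀)
  have hs_pos : ∀ᶠ i in l, 0 < s i := hs.eventually (lt_mem_nhds ha₀)
  have hr_pos : ∀ᶠ i in l, 0 < r i := hr.eventually_gt_atTop 0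
  have hu (y : ℝ) : Tendsto (fun i => y / r i) l (𝓝 0) := tendsto_const_nhds.div_atTop hr
  have hA : Tendsto (fun i => (a i / s i) ^ 2) l (𝓝 1) := by
    simpa [ha₀.ne'] using (ha.div hs ha₀.ne').pow 2
  have hE : Tendsto (fun i => (z₁ i ^ 2 + z₂ i ^ 2) / (2 * a i)
      - ((y₁ / r i - z₁ i) ^ 2 + (y₂ / r i - z₂ i) ^ 2) / (2 * s i)) l (𝓝 0) := by
    simpa using (((hz₁.pow 2).add (hz₂.pow 2)).div (ha.const_mul 2) (by positivity)).sub
      (((((hu y₁).sub hz₁).pow 2).add (((hu y₂).sub hz₂).pow 2)).div (hs.const_mul 2)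
        (by positivity))
  have hc : Tendsto (fun i => (y₁ - y₂) * (z₁ i - z₂ i) / s i / r i) l (𝓝[≠] 0) := by
    refine tendsto_nhdsWithin_iff.2 ⟨(((hz₁.sub hz₂).const_mul _).div hs ha₀.ne').div_atTop hr, ?_⟩
    filter_upwards [hs_pos, hr_pos, hz] with i hsi hri hzi
    exact div_ne_zero (div_ne_zero (mul_ne_zero (sub_ne_zero.2 hy) (sub_ne_zero.2 hzi)) hsi.ne')
      hri.ne'
  have hlim := ((hA.mul (continuous_exp.tendsto _ |>.comp hE)).mul
    (tendsto_one_sub_exp_neg_div.comp hc)).mul_const (y₁ - y₂)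
  rw [exp_zero, mul_one, one_mul, one_mul] at hlim
  refine hlim.congr' ?_
  filter_upwards [ha_pos, hs_pos, hr_pos, hz] with i hai hsi hri hzi
  exact (heatKernel_det_div_eq hai hsi hri hy hzi).symm

noncomputable def heatDetRatio (t y₁ y₂ : ℝ) (n : ℕ) (a z₁ z₂ : ℝ) : ℝ :=
  a * √n * (heatKernel (a - t / n) (y₁ / √n - z₁) * heatKernel (a - t / n) (y₂ / √n - z₂)
      - heatKernel (a - t / n) (y₁ / √n - z₂) * heatKernel (a - t / n) (y₂ / √n - z₁))
    / ((z₁ - z₂) * heatKernel a z₁ * heatKernel a z₂)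

theorem tendsto_heatDetRatio (t : ℝ) {y₁ y₂ : ℝ} (hy : y₁ ≠ y₂) {p : ℝ × ℝ × ℝ} (hp : 0 < p.1) :
    Tendsto (fun x : ℕ × ℝ × ℝ × ℝ => heatDetRatio t y₁ y₂ x.1 x.2.1 x.2.2.1 x.2.2.2)
      (atTop ×ˢ 𝓝[{q | q.2.1 ≠ q.2.2}] p) (𝓝 (y₁ - y₂)) := by
  have hq : Tendsto Prod.snd ((atTop : Filter ℕ) ×ˢ 𝓝[{q : ℝ × ℝ × ℝ | q.2.1 ≠ q.2.2}] p) (𝓝 p) :=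
    tendsto_snd.mono_right nhdsWithin_le_nhds
  have ha := (continuous_fst.tendsto p).comp hq
  refine tendsto_heatKernel_det_div hy hp ha ?_
    (tendsto_sqrt_atTop.comp (tendsto_natCast_atTop_atTop.comp tendsto_fst))
    ((continuous_snd.fst.tendsto p).comp hq) ((continuous_snd.snd.tendsto p).comp hq)
    (tendsto_snd.eventually self_mem_nhdsWithin)
  simpa using ha.sub ((tendsto_const_div_atTop_nhds_zero_nat t).comp tendsto_fst)

theorem stmt_16_general (M t y₁ y₂ : ℝ) (hM : 0 < M) (hy : y₂ < y₁) :
    ∀ ε : ℝ, 0 < ε → ∃ N : ℕ, ∀ n : ℕ, N ≤ n →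
      ∀ a z₁ z₂ : ℝ, a ∈ Set.Icc (1 / M) M → z₁ ∈ Set.Icc (-M) M →
        z₂ ∈ Set.Icc (-M) M → z₂ < z₁ →
        |a * Real.sqrt n
            * (heatKernel (a - t / n) (y₁ / Real.sqrt n - z₁)
                 * heatKernel (a - t / n) (y₂ / Real.sqrt n - z₂)
               - heatKernel (a - t / n) (y₁ / Real.sqrt n - z₂)
                 * heatKernel (a - t / n) (y₂ / Real.sqrt n - z₁))
            / ((z₁ - z₂) * heatKernel a z₁ * heatKernel a z₂)
          - (y₁ - y₂)| < ε := by
  intro ε hε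
  have hK : IsCompact (Icc (1 / M) M ×ˢ Icc (-M) M ×ˢ Icc (-M) M) :=
    isCompact_Icc.prod (isCompact_Icc.prod isCompact_Icc)
  have hclose := eventually_forall_mem_inter_of_isCompact hK
    (P := fun n q => dist (heatDetRatio t y₁ y₂ n q.1 q.2.1 q.2.2) (y₁ - y₂) < ε) fun p hp =>
    (tendsto_heatDetRatio t hy.ne' (lt_of_lt_of_le (by positivity) hp.1.1)).eventually
      (Metric.ball_mem_nhds _ hε)
  obtain ⟨N, hN⟩ := eventually_atTop.1 hclose
  refine ⟨N, fun n hn a z₁ z₂ ha hz₁ hz₂ hz => ?_⟩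
  exact hN n hn (a, z₁, z₂) ⟨⟨ha, hz₁, hz₂⟩, hz.ne'⟩

theorem stmt_16 (M t y₁ y₂ : ℝ) (hM : 0 < M) (ht : 0 < t) (hy : y₂ < y₁) :
    ∀ ε : ℝ, 0 < ε → ∃ N : ℕ, ∀ n : ℕ, N ≤ n →
      ∀ a z₁ z₂ : ℝ, a ∈ Set.Icc (1 / M) M → z₁ ∈ Set.Icc (-M) M →
        z₂ ∈ Set.Icc (-M) M → z₂ < z₁ →
        |a * Real.sqrt n
            * (heatKernel (a - t / n) (y₁ / Real.sqrt n - z₁)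
                 * heatKernel (a - t / n) (y₂ / Real.sqrt n - z₂)
               - heatKernel (a - t / n) (y₁ / Real.sqrt n - z₂)
                 * heatKernel (a - t / n) (y₂ / Real.sqrt n - z₁))
            / ((z₁ - z₂) * heatKernel a z₁ * heatKernel a z₂)
          - (y₁ - y₂)| < ε :=
  stmt_16_general M t y₁ y₂ hM hy
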